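/- Let H be a k-partite k-graph with n vertices in each class whose largest matching has size m. If T is a legal k-set (one vertex per partition class) such that H minus T contains a matching of size m − k + 1, then some vertex v ∈ T satisfies deg(v) ≤ n^{k-1} − (n−m)^{k-1}, and moreover n^{k-1} − (n−m)^{k-1} ≤ k·m·n^{k-2}. -/

import Mathlib

/-!
If every vertex of `T` had degree above `n^(k-1) - (n-m)^(k-1)`, the matching of `H - T` could
be grown greedily to size `m + 1`. Indeed, for any sets of at most `m` forbidden vertices in the
other classes, at most `n^(k-1) - (n-m)^(k-1)` edges through `T i` meet one of them, so some edge
through `T i` avoids them all. Adding such edges through the vertices of `T` one at a time, each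
avoiding the current matching and the vertices of `T` not yet used, keeps every forbidden set of
size at most `m` until the matching has `m + 1` edges. The second inequality is
`a^d - b^d ≤ (a - b) d a^(d-1)`.
-/

/-- `M` is a matching in the `k`-partite `k`-graph `H` (edges encoded as functions
`Fin k → Fin n`, one vertex per class). -/
def IsMatching {k n : ℕ} (H M : Finset (Fin k → Fin n)) : Prop :=
  M ⊆ H ∧ ∀ e ∈ M, ∀ f ∈ M, e ≠ f → ∀ i, e i ≠ f i

/-- The degree of the vertex `x` in class `c`. -/
def degV {k n : ℕ} (H : Finset (Fin k → Fin n)) (c : Fin k) (x : Fin n) : ℕ :=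
  (H.filter (fun e => e c = x)).card

open Finset Function

theorem Nat.pow_sub_pow_le_mul (a b d : ℕ) : a ^ d - b ^ d ≤ (a - b) * d * a ^ (d - 1) := by
  rcases le_total a b with hab | hba
  · simp [Nat.sub_eq_zero_of_le (Nat.pow_le_pow_left hab d)]
  have key := abs_pow_sub_pow_le (a : ℤ) b d
  have hpow := Nat.pow_le_pow_left hba d
  have hdiff : (0 : ℤ) ≤ (a : ℤ) - b := sub_nonneg.mpr (by exact_mod_cast hba)
  have hpowdiff : (0 : ℤ) ≤ (a : ℤ) ^ d - (b : ℤ) ^ d := sub_nonneg.mpr (by exact_mod_cast hpow)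
  rw [abs_of_nonneg hpowdiff, abs_of_nonneg hdiff, abs_of_nonneg (Nat.cast_nonneg a),
    abs_of_nonneg (Nat.cast_nonneg b), max_eq_left (by exact_mod_cast hba)] at key
  zify [hba, hpow]
  simpa using key

section PiFinset

variable {ι α : Type*} [Fintype ι] [DecidableEq ι]

theorem Fintype.card_piFinset_update_singleton (S : ι → Finset α) (i : ι) (x : α) :
    #(Fintype.piFinset (update S i {x})) = ∏ j ∈ univ.erase i, #(S j) := by
  rw [Fintype.card_piFinset, ← Finset.mul_prod_erase _ _ (mem_univ i)]
  simp only [update_self, card_singleton, one_mul]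
  refine Finset.prod_congr rfl fun j hj => ?_
  rw [update_of_ne (ne_of_mem_erase hj)]

theorem Fintype.mem_piFinset_update_singleton {S : ι → Finset α} {i : ι} {x : α} {e : ι → α} :
    e ∈ Fintype.piFinset (update S i {x}) ↔ e i = x ∧ ∀ j ≠ i, e j ∈ S j := by
  simp only [Fintype.mem_piFinset]
  constructor
  · intro h
    exact ⟨by simpa using h i, fun j hj => by simpa [update_of_ne hj] using h j⟩
  · rintro ⟨hi, hj⟩ j
    by_cases hji : j = i
    · subst hji; simpa using hi
    · simpa [update_of_ne hji] using hj j hji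

end PiFinset

theorem IsMatching.insert {k n : ℕ} {H M : Finset (Fin k → Fin n)} {e : Fin k → Fin n}
    (hM : IsMatching H M) (he : e ∈ H) (hdisj : ∀ f ∈ M, ∀ j, e j ≠ f j) :
    IsMatching H (insert e M) := by
  refine ⟨insert_subset he hM.1, ?_⟩
  simp only [mem_insert]
  rintro a (rfl | ha) b (rfl | hb) hab j
  · exact absurd rfl hab
  · exact hdisj b hb j
  · exact (hdisj a ha j).symm
  · exact hM.2 a ha b hb hab j

theorem exists_edge_through_avoiding {k n m : ℕ} {H : Finset (Fin k → Fin n)} {i : Fin k}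
    {x : Fin n} (hdeg : n ^ (k - 1) - (n - m) ^ (k - 1) < degV H i x)
    (F : Fin k → Finset (Fin n)) (hF : ∀ j ≠ i, #(F j) ≤ m) :
    ∃ e ∈ H, e i = x ∧ ∀ j ≠ i, e j ∉ F j := by
  set Q := Fintype.piFinset (update (fun _ => (univ : Finset (Fin n))) i {x})
  set P := Fintype.piFinset (update (fun j => (F j)ᶜ) i {x})
  have hQ : #Q = n ^ (k - 1) := by
    rw [Fintype.card_piFinset_update_singleton]
    simp
  have hP : (n - m) ^ (k - 1) ≤ #P := by
    rw [Fintype.card_piFinset_update_singleton]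
    calc (n - m) ^ (k - 1) = ∏ _j ∈ univ.erase i, (n - m) := by simp
      _ ≤ ∏ j ∈ univ.erase i, #(F j)ᶜ := by
        refine Finset.prod_le_prod' fun j hj => ?_
        rw [card_compl, Fintype.card_fin]
        have := hF j (ne_of_mem_erase hj)
        omega
  have hPQ : P ⊆ Q := fun e he => by
    rw [Fintype.mem_piFinset_update_singleton] at he ⊢
    exact ⟨he.1, fun j _ => mem_univ _⟩
  have hHQ : H.filter (fun e => e i = x) ⊆ Q := fun e he => by
    rw [Fintype.mem_piFinset_update_singleton]
    exact ⟨(mem_filter.mp he).2, fun j _ => mem_univ _⟩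
  obtain ⟨e, he⟩ := inter_nonempty_of_card_lt_card_add_card hHQ hPQ
    (by unfold degV at hdeg; omega)
  obtain ⟨heH, hei⟩ := mem_filter.mp (mem_inter.mp he).1
  have heP := Fintype.mem_piFinset_update_singleton.mp (mem_inter.mp he).2
  exact ⟨e, heH, hei, fun j hj => mem_compl.mp (heP.2 j hj)⟩

theorem IsMatching.exists_card_eq_card_add_of_degV_gt {k n m : ℕ}
    {H M : Finset (Fin k → Fin n)} {T : Fin k → Fin n} {J : Finset (Fin k)}
    (hM : IsMatching H M) (hMT : ∀ e ∈ M, ∀ j ∈ J, e j ≠ T j)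
    (hdeg : ∀ i ∈ J, n ^ (k - 1) - (n - m) ^ (k - 1) < degV H i (T i))
    (hcard : #M + #J ≤ m + 1) :
    ∃ M', IsMatching H M' ∧ #M' = #M + #J := by
  induction J using Finset.induction_on generalizing M with
  | empty => exact ⟨M, hM, rfl⟩
  | @insert i J hiJ ih =>
    rw [card_insert_of_notMem hiJ] at hcard
    -- Reserving `T j` for the classes still in `J` keeps `hMT` for the enlarged matching.
    let F : Fin k → Finset (Fin n) := fun j =>
      if j ∈ J then Insert.insert (T j) (M.image (· j)) else M.image (· j)
    have hMF : ∀ j, M.image (· j) ⊆ F j := fun j => by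
      by_cases hj : j ∈ J
      · simpa only [F, if_pos hj] using subset_insert _ _
      · simp only [F, if_neg hj, Subset.rfl]
    have hTF : ∀ j ∈ J, T j ∈ F j := fun j hj => by
      simp only [F, if_pos hj, mem_insert_self]
    have hF : ∀ j ≠ i, #(F j) ≤ m := fun j _ => by
      have himage : #(M.image (· j)) ≤ #M := card_image_le
      by_cases hj : j ∈ J
      · have := card_pos.mpr ⟨j, hj⟩
        have := card_insert_le (T j) (M.image (· j))
        simp only [F, if_pos hj]
        omega
      · simp only [F, if_neg hj]
        omega
    obtain ⟨e, heH, hei, heF⟩ := exists_edge_through_avoiding (hdeg i (mem_insert_self i J)) F hF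
    have hdisj : ∀ f ∈ M, ∀ j, e j ≠ f j := fun f hf j => by
      by_cases hji : j = i
      · subst hji
        exact hei ▸ (hMT f hf j (mem_insert_self j J)).symm
      · exact fun hef => heF j hji (hMF j (hef ▸ mem_image_of_mem _ hf))
    have heM : e ∉ M := fun he => hdisj e he i rfl
    have heMT : ∀ f ∈ Insert.insert e M, ∀ j ∈ J, f j ≠ T j := by
      simp only [mem_insert, forall_eq_or_imp]
      exact ⟨fun j hj hej => heF j (ne_of_mem_of_not_mem hj hiJ) (hej ▸ hTF j hj),
        fun f hf j hj => hMT f hf j (mem_insert_of_mem hj)⟩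
    obtain ⟨M', hM', hM'card⟩ := ih (hM.insert heH hdisj) heMT
      (fun j hj => hdeg j (mem_insert_of_mem hj)) (by rw [card_insert_of_notMem heM]; omega)
    exact ⟨M', hM', by rw [hM'card, card_insert_of_notMem heM, card_insert_of_notMem hiJ]; ring⟩

theorem degree_bound_of_removable_transversal_general (k n m : ℕ)
    (H : Finset (Fin k → Fin n))
    (hmax : (∃ M, IsMatching H M ∧ M.card = m) ∧
      ∀ M, IsMatching H M → M.card ≤ m)
    (T : Fin k → Fin n)
    (hT : ∃ M, IsMatching H M ∧ M.card = m + 1 - k ∧ ∀ e ∈ M, ∀ i, e i ≠ T i) :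
    (∃ i : Fin k, degV H i (T i) ≤ n ^ (k - 1) - (n - m) ^ (k - 1)) ∧
      n ^ (k - 1) - (n - m) ^ (k - 1) ≤ k * m * n ^ (k - 2) := by
  constructor
  · by_contra! hdeg
    obtain ⟨M, hM, hMcard, hMT⟩ := hT
    obtain ⟨J, -, hJ⟩ := exists_subset_card_eq (s := (univ : Finset (Fin k))) (n := m + 1 - #M)
      (by simp; omega)
    obtain ⟨M', hM', hM'card⟩ := hM.exists_card_eq_card_add_of_degV_gt (J := J)
      (fun e he j _ => hMT e he j) (fun i _ => hdeg i) (by omega)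
    have := hmax.2 M' hM'
    omega
  · calc n ^ (k - 1) - (n - m) ^ (k - 1) ≤ (n - (n - m)) * (k - 1) * n ^ (k - 1 - 1) :=
          Nat.pow_sub_pow_le_mul _ _ _
      _ ≤ k * m * n ^ (k - 2) := by
          rw [mul_comm k, Nat.sub_sub]
          gcongr <;> omega

/-- Let `H` be a `k`-partite `k`-graph with `n` vertices in each class whose largest
matching has size `m ≤ n`. If `T` is a legal `k`-set (one vertex `T i` per class)
such that `H` minus `T` contains a matching of size `m - k + 1`, then some vertex of
`T` has degree at most `n^(k-1) − (n−m)^(k-1)`; moreover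
`n^(k-1) − (n−m)^(k-1) ≤ k·m·n^(k-2)`. -/
theorem degree_bound_of_removable_transversal (k n m : ℕ) (hm : m ≤ n)
    (H : Finset (Fin k → Fin n))
    (hmax : (∃ M, IsMatching H M ∧ M.card = m) ∧
      ∀ M, IsMatching H M → M.card ≤ m)
    (T : Fin k → Fin n)
    (hT : ∃ M, IsMatching H M ∧ M.card = m + 1 - k ∧ ∀ e ∈ M, ∀ i, e i ≠ T i) :
    (∃ i : Fin k, degV H i (T i) ≤ n ^ (k - 1) - (n - m) ^ (k - 1)) ∧
      n ^ (k - 1) - (n - m) ^ (k - 1) ≤ k * m * n ^ (k - 2) :=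
  degree_bound_of_removable_transversal_general k n m H hmax T hT
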